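/- arXiv:2106.07878 — 2 statements merged into one kernel-verified Lean document; each statement's English description precedes it below -/
import Mathlib

section
/- Let K_{l_1*t_1,...,l_s*t_s} be a complete multipartite graph with t_1 > t_2 > ... > t_s ≥ 1. Then the adjacency matrix of K_{l_1*t_1,...,l_s*t_s} has eigenvalue 0 with multiplicity exactly Σ_{i=1}^{s} l_i(t_i − 1), eigenvalue −t_i with multiplicity exactly l_i − 1 for each 1 ≤ i ≤ s, and exactly s further eigenvalues λ_1,...,λ_s, each of which is simple and does not belong to {0, −t_1,...,−t_s}; moreover exactly one of λ_1,...,λ_s is positive. -/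
open Matrix Filter Topology Finset

/-- The signed adjacency matrix obtained from the matrix `A` by switching about the
vertex set `X`: entry `(i,j)` is multiplied by `-1` exactly when one of `i, j` lies in `X`. -/
def switchMatrix {m : Type*} [DecidableEq m] (X : Finset m) (A : Matrix m m ℝ) :
    Matrix m m ℝ :=
  fun i j => (if i ∈ X then (-1 : ℝ) else 1) * A i j * (if j ∈ X then (-1 : ℝ) else 1)

/-- Index set for the parts of `K_{l_1*t_1, …, l_s*t_s}`: the part `U_{i,j}` corresponds
to the pair `⟨i, j⟩`. -/
abbrev PartIdx {s : ℕ} (l : Fin s → ℕ) := (i : Fin s) × Fin (l i)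

/-- Vertex type of `K_{l_1*t_1, …, l_s*t_s}`: a vertex is a part together with a position
in that part (the part `⟨i, j⟩` has size `t i`). -/
abbrev MV {s : ℕ} (l t : Fin s → ℕ) := (p : PartIdx l) × Fin (t p.1)

/-- The complete multipartite graph `K_{l_1*t_1, …, l_s*t_s}` having, for each `i`,
exactly `l i` parts of size `t i`. -/
def cmGraph {s : ℕ} (l t : Fin s → ℕ) : SimpleGraph (MV l t) :=
  SimpleGraph.completeMultipartiteGraph (fun p : PartIdx l => Fin (t p.1))

instance cmDecidable {s : ℕ} (l t : Fin s → ℕ) : DecidableRel (cmGraph l t).Adj :=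
  fun a b => inferInstanceAs (Decidable (a.1 ≠ b.1))

namespace Stmt14
variable {s : ℕ} (l t : Fin s → ℕ)

noncomputable def S (v : MV l t → ℝ) (p : PartIdx l) : ℝ := ∑ x : Fin (t p.1), v ⟨p, x⟩
noncomputable def tot (v : MV l t → ℝ) : ℝ := ∑ x, v x

lemma sum_MV (g : MV l t → ℝ) : ∑ x, g x = ∑ p : PartIdx l, ∑ y : Fin (t p.1), g ⟨p, y⟩ := by
  rw [← Finset.univ_sigma_univ, Finset.sum_sigma]

lemma sum_PartIdx (g : PartIdx l → ℝ) : ∑ p, g p = ∑ i : Fin s, ∑ j : Fin (l i), g ⟨i, j⟩ := by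
  rw [← Finset.univ_sigma_univ, Finset.sum_sigma]

lemma tot_eq (v : MV l t → ℝ) : tot l t v = ∑ p, S l t v p := sum_MV l t v

lemma mulVec_adj (v : MV l t → ℝ) (x : MV l t) :
    (((cmGraph l t).adjMatrix ℝ) *ᵥ v) x = tot l t v - S l t v x.1 := by
  classical
  have h1 : (((cmGraph l t).adjMatrix ℝ) *ᵥ v) x
      = ∑ y, (if x.1 ≠ y.1 then (1:ℝ) else 0) * v y := by
    simp only [Matrix.mulVec, dotProduct, SimpleGraph.adjMatrix_apply]
    refine Finset.sum_congr rfl fun y _ => ?_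
    have hadj : (cmGraph l t).Adj x y ↔ x.1 ≠ y.1 := Iff.rfl
    by_cases h : x.1 = y.1 <;> simp [hadj, h]
  rw [h1]
  have h2 : ∀ y : MV l t, (if x.1 ≠ y.1 then (1:ℝ) else 0) * v y
      = v y - (if x.1 = y.1 then v y else 0) := by
    intro y; by_cases h : x.1 = y.1 <;> simp [h]
  rw [Finset.sum_congr rfl fun y _ => h2 y, Finset.sum_sub_distrib]
  congr 1
  rw [sum_MV]
  have h3 : ∀ p : PartIdx l, ∑ y : Fin (t p.1), (if x.1 = p then v ⟨p, y⟩ else 0)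
      = if x.1 = p then S l t v p else 0 := by
    intro p; by_cases h : x.1 = p <;> simp [h, S]
  rw [Finset.sum_congr rfl fun p _ => h3 p, Finset.sum_ite_eq]
  simp

/-- the endomorphism given by the adjacency matrix -/
noncomputable abbrev TA : Module.End ℝ (MV l t → ℝ) := Matrix.toLin' ((cmGraph l t).adjMatrix ℝ)

lemma mem_eigA (μ : ℝ) (v : MV l t → ℝ) :
    v ∈ Module.End.eigenspace (TA l t) μ ↔ ∀ x, tot l t v - S l t v x.1 = μ * v x := by
  rw [Module.End.mem_eigenspace_iff]
  constructor
  · intro h x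
    have := congrFun h x
    rw [Matrix.toLin'_apply, mulVec_adj] at this
    simpa using this
  · intro h; funext x
    rw [Matrix.toLin'_apply, mulVec_adj]
    simpa using h x

/-- quotient matrix on part indices -/
noncomputable def Bmat : Matrix (PartIdx l) (PartIdx l) ℝ :=
  fun p q => if p = q then 0 else (t q.1 : ℝ)

noncomputable abbrev TB : Module.End ℝ (PartIdx l → ℝ) := Matrix.toLin' (Bmat l t)

noncomputable def cB (a : PartIdx l → ℝ) : ℝ := ∑ q : PartIdx l, (t q.1 : ℝ) * a q

lemma mem_eigB (μ : ℝ) (a : PartIdx l → ℝ) :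
    a ∈ Module.End.eigenspace (TB l t) μ ↔ ∀ p, (μ + (t p.1 : ℝ)) * a p = cB l t a := by
  rw [Module.End.mem_eigenspace_iff]
  have key : ∀ p, ((Bmat l t) *ᵥ a) p = cB l t a - (t p.1 : ℝ) * a p := by
    intro p
    have : ∀ q : PartIdx l, (Bmat l t) p q * a q
        = (t q.1 : ℝ) * a q - (if p = q then (t q.1 : ℝ) * a q else 0) := by
      intro q; by_cases h : p = q <;> simp [Bmat, h]
    simp only [Matrix.mulVec, dotProduct]
    rw [Finset.sum_congr rfl fun q _ => this q, Finset.sum_sub_distrib, Finset.sum_ite_eq]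
    simp [cB]
  constructor
  · intro h p
    have := congrFun h p
    rw [Matrix.toLin'_apply, key] at this
    simp only [Pi.smul_apply, smul_eq_mul] at this
    linarith [this]
  · intro h; funext p
    rw [Matrix.toLin'_apply, key]
    have := h p
    simp only [Pi.smul_apply, smul_eq_mul]
    linarith [this]

noncomputable def Φ : (PartIdx l → ℝ) →ₗ[ℝ] (MV l t → ℝ) :=
  LinearMap.funLeft ℝ ℝ Sigma.fst

@[simp] lemma Φ_apply (a : PartIdx l → ℝ) (x : MV l t) : Φ l t a x = a x.1 := rfl

lemma S_Φ (a : PartIdx l → ℝ) (p : PartIdx l) : S l t (Φ l t a) p = (t p.1 : ℝ) * a p := by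
  simp [S, mul_comm]

lemma tot_Φ (a : PartIdx l → ℝ) : tot l t (Φ l t a) = cB l t a := by
  rw [tot_eq, cB]
  exact Finset.sum_congr rfl fun p _ => S_Φ l t a p

variable (ht : ∀ i, 1 ≤ t i)

include ht in
lemma Φ_inj : Function.Injective (Φ l t) := by
  intro a b hab
  funext p
  have hx : 0 < t p.1 := ht p.1
  exact congrFun hab ⟨p, ⟨0, hx⟩⟩

omit ht in
lemma Φ_maps (μ : ℝ) (a : PartIdx l → ℝ) (ha : a ∈ Module.End.eigenspace (TB l t) μ) :
    Φ l t a ∈ Module.End.eigenspace (TA l t) μ := by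
  rw [mem_eigB] at ha
  rw [mem_eigA]
  intro x
  rw [tot_Φ, S_Φ, Φ_apply]
  have := ha x.1
  linarith [this]

include ht in
lemma Φ_surj (μ : ℝ) (hμ : μ ≠ 0) (v : MV l t → ℝ)
    (hv : v ∈ Module.End.eigenspace (TA l t) μ) :
    -- ht unused marker

    ∃ a ∈ Module.End.eigenspace (TB l t) μ, Φ l t a = v := by
  rw [mem_eigA] at hv
  set a : PartIdx l → ℝ := fun p => (tot l t v - S l t v p) / μ with ha_def
  have hva : ∀ x : MV l t, v x = a x.1 := by
    intro x
    rw [ha_def]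
    field_simp
    linarith [hv x]
  have hS : ∀ p, S l t v p = (t p.1 : ℝ) * a p := by
    intro p
    rw [S]
    rw [Finset.sum_congr rfl fun y _ => hva ⟨p, y⟩]
    simp [mul_comm]
  have htot : tot l t v = cB l t a := by
    rw [tot_eq, cB]
    exact Finset.sum_congr rfl fun p _ => hS p
  refine ⟨a, ?_, ?_⟩
  · rw [mem_eigB]
    intro p
    have h1 : μ * a p = tot l t v - S l t v p := by
      rw [ha_def]; field_simp
    rw [hS p, htot] at h1
    linarith [h1]
  · funext x
    rw [Φ_apply]
    exact (hva x).symm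

include ht in
lemma finrank_eig_eq (μ : ℝ) (hμ : μ ≠ 0) :
    Module.finrank ℝ (Module.End.eigenspace (TA l t) μ)
      = Module.finrank ℝ (Module.End.eigenspace (TB l t) μ) := by
  symm
  refine LinearEquiv.finrank_eq (LinearEquiv.ofBijective
    ((Φ l t).restrict (Φ_maps l t μ)) ⟨?_, ?_⟩)
  · intro a b hab
    have : Φ l t a.1 = Φ l t b.1 := congrArg Subtype.val hab
    exact Subtype.ext (Φ_inj l t ht this)
  · rintro ⟨v, hv⟩
    obtain ⟨a, ha, hav⟩ := Φ_surj l t ht μ hμ v hv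
    exact ⟨⟨a, ha⟩, Subtype.ext hav⟩

include ht in
lemma hasEig_transfer (μ : ℝ) (hμ : μ ≠ 0)
    (h : Module.End.HasEigenvalue (TA l t) μ) :
    ∃ a : PartIdx l → ℝ, a ≠ 0 ∧ a ∈ Module.End.eigenspace (TB l t) μ := by
  obtain ⟨v, hv, hv0⟩ := h.exists_hasEigenvector
  obtain ⟨a, ha, hav⟩ := Φ_surj l t ht μ hμ v hv
  refine ⟨a, ?_, ha⟩
  rintro rfl
  apply hv0
  rw [← hav]
  simp [Φ]

/-- part-sums as a linear map -/
noncomputable def L0 : (MV l t → ℝ) →ₗ[ℝ] (PartIdx l → ℝ) where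
  toFun := fun v p => S l t v p
  map_add' := by intro v w; funext p; simp [S, Finset.sum_add_distrib]
  map_smul' := by intro c v; funext p; simp [S, Finset.mul_sum]

lemma card_PartIdx : Fintype.card (PartIdx l) = ∑ i, l i := by
  simp [Fintype.card_sigma]

lemma card_MV : Fintype.card (MV l t) = ∑ i, l i * t i := by
  rw [Fintype.card_sigma]
  have : ∀ p : PartIdx l, Fintype.card (Fin (t p.1)) = t p.1 := fun p => Fintype.card_fin _
  rw [Finset.sum_congr rfl fun p _ => this p]
  have := sum_PartIdx l (fun p => ((t p.1 : ℝ)))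
  -- do it over ℕ directly
  rw [← Finset.univ_sigma_univ, Finset.sum_sigma]
  simp [mul_comm]

variable (hparts : 2 ≤ ∑ i, l i)

include ht hparts in
lemma eigenspace_zero :
    Module.End.eigenspace (TA l t) 0 = LinearMap.ker (L0 l t) := by
  ext v
  rw [mem_eigA, LinearMap.mem_ker]
  constructor
  · intro h
    have hSp : ∀ p : PartIdx l, S l t v p = tot l t v := by
      intro p
      have := h ⟨p, ⟨0, ht p.1⟩⟩
      simp at this
      linarith [this]
    have htot : tot l t v = (Fintype.card (PartIdx l) : ℝ) * tot l t v := by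
      conv_lhs => rw [tot_eq]
      rw [Finset.sum_congr rfl fun p _ => hSp p, Finset.sum_const, Finset.card_univ,
        nsmul_eq_mul]
    have hcard : 2 ≤ (Fintype.card (PartIdx l) : ℝ) := by
      rw [card_PartIdx]
      exact_mod_cast hparts
    have h0 : tot l t v = 0 := by
      have hz : ((Fintype.card (PartIdx l) : ℝ) - 1) * tot l t v = 0 := by linarith
      rcases mul_eq_zero.mp hz with h | h
      · linarith
      · exact h
    funext p
    show S l t v p = 0
    rw [hSp p, h0]
  · intro h x
    have hS0 : ∀ p, S l t v p = 0 := fun p => congrFun h p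
    have : tot l t v = 0 := by
      rw [tot_eq, Finset.sum_congr rfl fun p _ => hS0 p]; simp
    simp [this, hS0 x.1]

include ht in
lemma L0_surj : Function.Surjective (L0 l t) := by
  intro g
  refine ⟨fun x => g x.1 / (t x.1.1 : ℝ), ?_⟩
  funext p
  have h1 : (0:ℝ) < (t p.1 : ℝ) := by exact_mod_cast ht p.1
  show S l t (fun x => g x.1 / (t x.1.1 : ℝ)) p = g p
  simp only [S]
  rw [Finset.sum_const, Finset.card_univ, Fintype.card_fin, nsmul_eq_mul]
  field_simp

include ht hparts in
lemma finrank_zero :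
    Module.finrank ℝ (Module.End.eigenspace (TA l t) 0) = ∑ i, l i * (t i - 1) := by
  rw [eigenspace_zero l t ht hparts]
  have hrn := LinearMap.finrank_range_add_finrank_ker (L0 l t)
  rw [LinearMap.range_eq_top.mpr (L0_surj l t ht)] at hrn
  rw [finrank_top] at hrn
  rw [Module.finrank_fintype_fun_eq_card, Module.finrank_fintype_fun_eq_card,
    card_MV, card_PartIdx] at hrn
  have hsum : ∑ i, l i * (t i - 1) + ∑ i, l i = ∑ i, l i * t i := by
    rw [← Finset.sum_add_distrib]
    refine Finset.sum_congr rfl fun i _ => ?_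
    have := ht i
    cases Nat.exists_eq_add_of_le this with
    | intro k hk => rw [hk, Nat.add_sub_cancel_left]; ring
  omega

variable (hanti : ∀ i j : Fin s, i < j → t j < t i) (hl : ∀ i, 1 ≤ l i)

include hanti in
lemma t_ne {i j : Fin s} (h : i ≠ j) : (t i : ℝ) ≠ (t j : ℝ) := by
  rcases lt_or_gt_of_ne h with h' | h'
  · have := hanti i j h'; exact_mod_cast Nat.ne_of_gt this
  · have := hanti j i h'; exact_mod_cast Nat.ne_of_lt this

/-- sum as a linear map -/
noncomputable def sumLM (n : ℕ) : (Fin n → ℝ) →ₗ[ℝ] ℝ where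
  toFun := fun b => ∑ k, b k
  map_add' := by intro v w; simp [Finset.sum_add_distrib]
  map_smul' := by intro c v; simp [Finset.mul_sum]

lemma finrank_ker_sumLM (n : ℕ) (hn : 1 ≤ n) :
    Module.finrank ℝ (LinearMap.ker (sumLM n)) = n - 1 := by
  have hsurj : Function.Surjective (sumLM n) := by
    intro c
    refine ⟨fun k => if k = ⟨0, hn⟩ then c else 0, ?_⟩
    simp [sumLM]
  have hrn := LinearMap.finrank_range_add_finrank_ker (sumLM n)
  rw [LinearMap.range_eq_top.mpr hsurj, finrank_top, Module.finrank_fintype_fun_eq_card,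
    Fintype.card_fin, Module.finrank_self] at hrn
  omega

/-- restriction-to-fiber linear map -/
noncomputable def Rj (j : Fin s) : (PartIdx l → ℝ) →ₗ[ℝ] (Fin (l j) → ℝ) where
  toFun := fun a k => a ⟨j, k⟩
  map_add' := by intro v w; funext k; simp
  map_smul' := by intro c v; funext k; simp

lemma cB_fiber (j : Fin s) (a : PartIdx l → ℝ) (hoff : ∀ p : PartIdx l, p.1 ≠ j → a p = 0) :
    cB l t a = (t j : ℝ) * ∑ k : Fin (l j), a ⟨j, k⟩ := by
  rw [cB, sum_PartIdx]
  rw [Finset.sum_eq_single j]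
  · rw [Finset.mul_sum]
  · intro i _ hij
    apply Finset.sum_eq_zero
    intro k _
    rw [hoff ⟨i, k⟩ hij, mul_zero]
  · intro h; exact absurd (Finset.mem_univ j) h

include ht hanti hl in
lemma mem_eigB_neg (j : Fin s) (a : PartIdx l → ℝ) :
    a ∈ Module.End.eigenspace (TB l t) (-(t j : ℝ)) ↔
      (∀ p : PartIdx l, p.1 ≠ j → a p = 0) ∧ ∑ k : Fin (l j), a ⟨j, k⟩ = 0 := by
  rw [mem_eigB]
  constructor
  · intro h
    have hc : cB l t a = 0 := by
      have := h ⟨j, ⟨0, hl j⟩⟩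
      simp at this
      linarith
    have hoff : ∀ p : PartIdx l, p.1 ≠ j → a p = 0 := by
      intro p hp
      have := h p
      rw [hc] at this
      have hne : (-(t j : ℝ) + (t p.1 : ℝ)) ≠ 0 := by
        have := t_ne t hanti hp
        intro hcon
        apply this
        linarith
      exact (mul_eq_zero.mp this).resolve_left hne
    refine ⟨hoff, ?_⟩
    have := cB_fiber l t j a hoff
    rw [hc] at this
    have htj : (0:ℝ) < (t j : ℝ) := by exact_mod_cast ht j
    have := this.symm
    rcases mul_eq_zero.mp this with h' | h'
    · linarith
    · exact h'
  · rintro ⟨hoff, hsum⟩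
    have hc : cB l t a = 0 := by rw [cB_fiber l t j a hoff, hsum, mul_zero]
    intro p
    rw [hc]
    by_cases hp : p.1 = j
    · have : (t p.1 : ℝ) = (t j : ℝ) := by rw [hp]
      rw [this]; ring
    · rw [hoff p hp, mul_zero]

include ht hanti hl in
lemma finrank_eigB_neg (j : Fin s) :
    Module.finrank ℝ (Module.End.eigenspace (TB l t) (-(t j : ℝ))) = l j - 1 := by
  rw [← finrank_ker_sumLM (l j) (hl j)]
  refine LinearEquiv.finrank_eq (LinearEquiv.ofBijective
    ((Rj l j).restrict (p := Module.End.eigenspace (TB l t) (-(t j : ℝ)))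
      (q := LinearMap.ker (sumLM (l j))) ?_) ⟨?_, ?_⟩)
  · intro a ha
    rw [LinearMap.mem_ker]
    have := ((mem_eigB_neg l t ht hanti hl j a).mp ha).2
    exact this
  · intro a b hab
    have h1 := ((mem_eigB_neg l t ht hanti hl j a.1).mp a.2).1
    have h2 := ((mem_eigB_neg l t ht hanti hl j b.1).mp b.2).1
    apply Subtype.ext
    funext p
    by_cases hp : p.1 = j
    · obtain ⟨i, k⟩ := p
      subst hp
      exact congrFun (congrArg Subtype.val hab) k
    · rw [h1 p hp, h2 p hp]
  · rintro ⟨b, hb⟩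
    rw [LinearMap.mem_ker] at hb
    classical
    set a : PartIdx l → ℝ := fun p => if h : p.1 = j then b (Fin.cast (congrArg l h) p.2) else 0
      with ha_def
    have hoff : ∀ p : PartIdx l, p.1 ≠ j → a p = 0 := by
      intro p hp; simp [ha_def, hp]
    have hfib : ∀ k : Fin (l j), a ⟨j, k⟩ = b k := by
      intro k; simp [ha_def]
    have hmem : a ∈ Module.End.eigenspace (TB l t) (-(t j : ℝ)) := by
      rw [mem_eigB_neg l t ht hanti hl j]
      refine ⟨hoff, ?_⟩
      rw [Finset.sum_congr rfl fun k _ => hfib k]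
      exact hb
    refine ⟨⟨a, hmem⟩, ?_⟩
    apply Subtype.ext
    funext k
    exact hfib k

noncomputable def fr (x : ℝ) : ℝ := ∑ i, (l i : ℝ) * (t i : ℝ) / (x + (t i : ℝ))

lemma sum_parts_fiber (g : Fin s → ℝ) : ∑ p : PartIdx l, g p.1 = ∑ i, (l i : ℝ) * g i := by
  rw [sum_PartIdx]
  refine Finset.sum_congr rfl fun i _ => ?_
  simp [mul_comm]

lemma cB_w (μ : ℝ) : cB l t (fun p => (μ + (t p.1 : ℝ))⁻¹) = fr l t μ := by
  rw [cB, sum_parts_fiber l (fun i => (t i : ℝ) * (μ + (t i : ℝ))⁻¹)]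
  refine Finset.sum_congr rfl fun i _ => ?_
  rw [div_eq_mul_inv, mul_assoc]

lemma eigB_form (μ : ℝ) (hμd : ∀ i, μ + (t i : ℝ) ≠ 0) (a : PartIdx l → ℝ)
    (ha : a ∈ Module.End.eigenspace (TB l t) μ) :
    ∀ p, a p = cB l t a * (μ + (t p.1 : ℝ))⁻¹ := by
  rw [mem_eigB] at ha
  intro p
  rw [← div_eq_mul_inv, eq_div_iff (hμd p.1), mul_comm]
  exact ha p

lemma cB_eq_mul_fr (μ : ℝ) (hμd : ∀ i, μ + (t i : ℝ) ≠ 0) (a : PartIdx l → ℝ)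
    (ha : a ∈ Module.End.eigenspace (TB l t) μ) :
    cB l t a = cB l t a * fr l t μ := by
  have hform := eigB_form l t μ hμd a ha
  calc cB l t a = ∑ p : PartIdx l, (t p.1 : ℝ) * a p := rfl
    _ = ∑ p : PartIdx l, (t p.1 : ℝ) * (cB l t a * (μ + (t p.1 : ℝ))⁻¹) :=
        Finset.sum_congr rfl fun p _ => by rw [hform p]
    _ = cB l t a * ∑ p : PartIdx l, (t p.1 : ℝ) * (μ + (t p.1 : ℝ))⁻¹ := by
        rw [Finset.mul_sum]
        exact Finset.sum_congr rfl fun p _ => by ring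
    _ = cB l t a * fr l t μ := by
        congr 1
        rw [← cB_w l t μ, cB]

include hparts in
lemma eigB_generic (μ : ℝ) (hμd : ∀ i, μ + (t i : ℝ) ≠ 0) (hfμ : fr l t μ = 1) :
    Module.finrank ℝ (Module.End.eigenspace (TB l t) μ) = 1 := by
  classical
  set w : PartIdx l → ℝ := fun p => (μ + (t p.1 : ℝ))⁻¹ with hw
  have hwmem : w ∈ Module.End.eigenspace (TB l t) μ := by
    rw [mem_eigB]
    intro p
    rw [hw]
    have h1 : (μ + (t p.1 : ℝ)) * (μ + (t p.1 : ℝ))⁻¹ = 1 := mul_inv_cancel₀ (hμd p.1)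
    rw [h1, ← hw, cB_w, hfμ]
  have hspan : Module.End.eigenspace (TB l t) μ = Submodule.span ℝ {w} := by
    apply le_antisymm
    · intro a ha
      have : a = cB l t a • w := by
        funext p
        rw [Pi.smul_apply, hw, smul_eq_mul]
        exact eigB_form l t μ hμd a ha p
      rw [this]
      exact Submodule.smul_mem _ _ (Submodule.mem_span_singleton_self w)
    · rw [Submodule.span_le, Set.singleton_subset_iff]
      exact hwmem
  rw [hspan]
  apply finrank_span_singleton
  have hcard : 0 < Fintype.card (PartIdx l) := by
    rw [card_PartIdx]; omega
  obtain ⟨p⟩ := Fintype.card_pos_iff.mp hcard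
  intro h0
  have := congrFun h0 p
  rw [hw] at this
  exact hμd p.1 (by simpa [inv_eq_zero] using this)

lemma eigB_complete (μ : ℝ) (hμd : ∀ i, μ + (t i : ℝ) ≠ 0) (a : PartIdx l → ℝ) (ha0 : a ≠ 0)
    (ha : a ∈ Module.End.eigenspace (TB l t) μ) : fr l t μ = 1 := by
  have hform := eigB_form l t μ hμd a ha
  have hc : cB l t a ≠ 0 := by
    intro h0
    apply ha0
    funext p
    rw [hform p, h0, zero_mul]
    rfl
  have h3 := cB_eq_mul_fr l t μ hμd a ha
  have := mul_left_cancel₀ hc (by rw [← h3, mul_one] : cB l t a * 1 = cB l t a * fr l t μ)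
  exact this.symm

end Stmt14


namespace Stmt14An
variable {s : ℕ} (l t : Fin s → ℕ)

noncomputable def fr (x : ℝ) : ℝ := ∑ i, (l i : ℝ) * (t i : ℝ) / (x + (t i : ℝ))

def Q (k : Fin s) (x : ℝ) : Prop := -(t k : ℝ) < x ∧ ∀ i, k < i → x < -(t i : ℝ)

variable (hanti : ∀ i j : Fin s, i < j → t j < t i) (hl : ∀ i, 1 ≤ l i) (ht : ∀ i, 1 ≤ t i)

include hanti ht in
lemma denom_pos_of_le {k i : Fin s} {x : ℝ} (hQ : Q t k x) (hik : i ≤ k) : 0 < x + (t i : ℝ) := by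
  have h1 : (t k : ℝ) ≤ (t i : ℝ) := by
    rcases eq_or_lt_of_le hik with h | h
    · rw [h]
    · exact_mod_cast le_of_lt (hanti i k h)
  linarith [hQ.1]

include hanti in
lemma denom_neg_of_gt {k i : Fin s} {x : ℝ} (hQ : Q t k x) (hik : k < i) : x + (t i : ℝ) < 0 := by
  have := hQ.2 i hik
  linarith

include hanti ht in
lemma denom_ne {k i : Fin s} {x : ℝ} (hQ : Q t k x) : x + (t i : ℝ) ≠ 0 := by
  rcases le_or_gt i k with h | h
  · exact ne_of_gt (denom_pos_of_le t hanti ht hQ h)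
  · exact ne_of_lt (denom_neg_of_gt t hanti hQ h)

include hanti ht hl in
lemma fr_strictAntiOn (hs : 0 < s) {k : Fin s} {x y : ℝ} (hx : Q t k x) (hy : Q t k y)
    (hxy : x < y) : fr l t y < fr l t x := by
  apply Finset.sum_lt_sum_of_nonempty
  · exact Finset.univ_nonempty_iff.mpr ⟨⟨0, hs⟩⟩
  · intro i _
    have hc : (0:ℝ) < (l i : ℝ) * (t i : ℝ) := by
      have h1 : (0:ℝ) < (l i : ℝ) := by exact_mod_cast hl i
      have h2 : (0:ℝ) < (t i : ℝ) := by exact_mod_cast ht i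
      positivity
    have hprod : 0 < (x + (t i : ℝ)) * (y + (t i : ℝ)) := by
      rcases le_or_gt i k with h | h
      · exact mul_pos (denom_pos_of_le t hanti ht hx h) (denom_pos_of_le t hanti ht hy h)
      · have h1 := denom_neg_of_gt t hanti hx h
        have h2 := denom_neg_of_gt t hanti hy h
        exact mul_pos_of_neg_of_neg h1 h2
    have hx0 : x + (t i : ℝ) ≠ 0 := by
      intro h0; rw [h0, zero_mul] at hprod; exact lt_irrefl 0 hprod
    have hy0 : y + (t i : ℝ) ≠ 0 := by
      intro h0; rw [h0, mul_zero] at hprod; exact lt_irrefl 0 hprod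
    have hdiff : (l i : ℝ) * (t i : ℝ) / (x + (t i : ℝ)) - (l i : ℝ) * (t i : ℝ) / (y + (t i : ℝ))
        = ((l i : ℝ) * (t i : ℝ)) * (y - x) / ((x + (t i : ℝ)) * (y + (t i : ℝ))) := by
      field_simp
      ring
    have hposd : 0 < ((l i : ℝ) * (t i : ℝ)) * (y - x) / ((x + (t i : ℝ)) * (y + (t i : ℝ))) :=
      div_pos (mul_pos hc (by linarith)) hprod
    linarith


include hanti ht in
lemma fr_continuousOn {k : Fin s} {A : Set ℝ} (hA : ∀ x ∈ A, Q t k x) :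
    ContinuousOn (fr l t) A := by
  apply continuousOn_finset_sum
  intro i _
  apply ContinuousOn.div continuousOn_const
  · exact (continuous_id.add continuous_const).continuousOn
  · intro x hx
    exact denom_ne t hanti ht (hA x hx)

include ht in
lemma fr_zero : fr l t 0 = ∑ i, (l i : ℝ) := by
  refine Finset.sum_congr rfl fun i _ => ?_
  have h2 : (0:ℝ) < (t i : ℝ) := by exact_mod_cast ht i
  field_simp
  ring

include hanti in
lemma Q_ordConnected {k : Fin s} {a b z : ℝ} (ha : Q t k a) (hb : Q t k b)
    (h1 : a ≤ z) (h2 : z ≤ b) : Q t k z := by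
  refine ⟨lt_of_lt_of_le ha.1 h1, fun i hi => lt_of_le_of_lt h2 (hb.2 i hi)⟩

include hanti hl ht in
lemma fr_tendsto_pole (k : Fin s) :
    Tendsto (fr l t) (𝓝[>] (-(t k : ℝ))) atTop := by
  have hmain : Tendsto (fun x : ℝ => (l k : ℝ) * (t k : ℝ) / (x + (t k : ℝ)))
      (𝓝[>] (-(t k : ℝ))) atTop := by
    have h1 : Tendsto (fun x : ℝ => x + (t k : ℝ)) (𝓝[>] (-(t k : ℝ))) (𝓝[>] 0) := by
      rw [tendsto_nhdsWithin_iff]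
      constructor
      · have h := Continuous.tendsto (by continuity : Continuous (fun x : ℝ => x + (t k : ℝ))) (-(t k : ℝ))
        simp only [neg_add_cancel] at h
        exact h.mono_left nhdsWithin_le_nhds
      · filter_upwards [eventually_mem_nhdsWithin] with x hx
        simp only [Set.mem_Ioi] at *
        linarith
    have h2 : Tendsto (fun x : ℝ => (x + (t k : ℝ))⁻¹) (𝓝[>] (-(t k : ℝ))) atTop :=
      tendsto_inv_nhdsGT_zero.comp h1
    have hc : (0:ℝ) < (l k : ℝ) * (t k : ℝ) := by
      have := hl k; have := ht k; positivity
    have := Filter.Tendsto.const_mul_atTop hc h2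
    simpa [div_eq_mul_inv] using this
  have hrest : Tendsto (fun x : ℝ => ∑ i ∈ univ.erase k, (l i : ℝ) * (t i : ℝ) / (x + (t i : ℝ)))
      (𝓝[>] (-(t k : ℝ))) (𝓝 (∑ i ∈ univ.erase k, (l i : ℝ) * (t i : ℝ) / (-(t k : ℝ) + (t i : ℝ)))) := by
    apply tendsto_nhdsWithin_of_tendsto_nhds
    apply tendsto_finset_sum
    intro i hi
    have hne : (-(t k : ℝ)) + (t i : ℝ) ≠ 0 := by
      have hik : i ≠ k := Finset.ne_of_mem_erase hi
      have : (t i : ℝ) ≠ (t k : ℝ) := by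
        rcases lt_or_gt_of_ne hik with h | h
        · exact_mod_cast Nat.ne_of_lt' (hanti i k h)
        · exact_mod_cast Nat.ne_of_lt (hanti k i h)
      intro hcon; apply this; linarith
    exact (tendsto_const_nhds.div ((continuous_id.add continuous_const).tendsto _) hne)
  have hsplit : ∀ x : ℝ, fr l t x = (∑ i ∈ univ.erase k, (l i : ℝ) * (t i : ℝ) / (x + (t i : ℝ)))
      + (l k : ℝ) * (t k : ℝ) / (x + (t k : ℝ)) := by
    intro x
    rw [fr, ← Finset.sum_erase_add _ _ (Finset.mem_univ k)]
  have := Filter.Tendsto.add_atTop hrest hmain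
  exact this.congr (fun x => (hsplit x).symm)

include hanti hl ht in
lemma fr_tendsto_pole' (k : Fin s) :
    Tendsto (fr l t) (𝓝[<] (-(t k : ℝ))) atBot := by
  have hmain : Tendsto (fun x : ℝ => (l k : ℝ) * (t k : ℝ) / (x + (t k : ℝ)))
      (𝓝[<] (-(t k : ℝ))) atBot := by
    have h1 : Tendsto (fun x : ℝ => -(x + (t k : ℝ))) (𝓝[<] (-(t k : ℝ))) (𝓝[>] 0) := by
      rw [tendsto_nhdsWithin_iff]
      constructor
      · have h := Continuous.tendsto (by continuity : Continuous (fun x : ℝ => -(x + (t k : ℝ)))) (-(t k : ℝ))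
        have h' : -(-(t k : ℝ) + (t k : ℝ)) = 0 := by ring
        rw [h'] at h
        exact h.mono_left nhdsWithin_le_nhds
      · filter_upwards [eventually_mem_nhdsWithin] with x hx
        simp only [Set.mem_Iio, Set.mem_Ioi] at *
        linarith
    have h2 : Tendsto (fun x : ℝ => (-(x + (t k : ℝ)))⁻¹) (𝓝[<] (-(t k : ℝ))) atTop :=
      tendsto_inv_nhdsGT_zero.comp h1
    have hc : (0:ℝ) < (l k : ℝ) * (t k : ℝ) := by
      have := hl k; have := ht k; positivity
    have h3 := Filter.Tendsto.const_mul_atTop hc h2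
    have h4 : Tendsto (fun x : ℝ => -((l k : ℝ) * (t k : ℝ) * (-(x + (t k : ℝ)))⁻¹))
        (𝓝[<] (-(t k : ℝ))) atBot := Filter.tendsto_neg_atTop_atBot.comp h3
    refine h4.congr (fun x => ?_)
    rw [div_eq_mul_inv]
    by_cases h : x + (t k : ℝ) = 0
    · rw [h]; simp
    · have hne2 : (-(t k : ℝ) + -x) ≠ 0 := by intro h0; apply h; linarith
      field_simp
  have hrest : Tendsto (fun x : ℝ => ∑ i ∈ univ.erase k, (l i : ℝ) * (t i : ℝ) / (x + (t i : ℝ)))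
      (𝓝[<] (-(t k : ℝ))) (𝓝 (∑ i ∈ univ.erase k, (l i : ℝ) * (t i : ℝ) / (-(t k : ℝ) + (t i : ℝ)))) := by
    apply tendsto_nhdsWithin_of_tendsto_nhds
    apply tendsto_finset_sum
    intro i hi
    have hne : (-(t k : ℝ)) + (t i : ℝ) ≠ 0 := by
      have hik : i ≠ k := Finset.ne_of_mem_erase hi
      have : (t i : ℝ) ≠ (t k : ℝ) := by
        rcases lt_or_gt_of_ne hik with h | h
        · exact_mod_cast Nat.ne_of_lt' (hanti i k h)
        · exact_mod_cast Nat.ne_of_lt (hanti k i h)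
      intro hcon; apply this; linarith
    exact (tendsto_const_nhds.div ((continuous_id.add continuous_const).tendsto _) hne)
  have hsplit : ∀ x : ℝ, fr l t x = (∑ i ∈ univ.erase k, (l i : ℝ) * (t i : ℝ) / (x + (t i : ℝ)))
      + (l k : ℝ) * (t k : ℝ) / (x + (t k : ℝ)) := by
    intro x
    rw [fr, ← Finset.sum_erase_add _ _ (Finset.mem_univ k)]
  have := Filter.Tendsto.add_atBot hrest hmain
  exact this.congr (fun x => (hsplit x).symm)

lemma fr_tendsto_atTop : Tendsto (fr l t) atTop (𝓝 0) := by
  have : Tendsto (fun x : ℝ => ∑ i : Fin s, (l i : ℝ) * (t i : ℝ) / (x + (t i : ℝ))) atTop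
      (𝓝 (∑ i : Fin s, (0:ℝ))) := by
    apply tendsto_finset_sum
    intro i _
    have h1 : Tendsto (fun x : ℝ => x + (t i : ℝ)) atTop atTop :=
      tendsto_atTop_add_const_right _ _ tendsto_id
    exact Filter.Tendsto.div_atTop tendsto_const_nhds h1
  simp only [Finset.sum_const_zero] at this
  exact this


variable (hparts : 2 ≤ ∑ i, l i)

include hanti hl ht hparts in
lemma root_exists (k : Fin s) :
    ∃ x : ℝ, Q t k x ∧ fr l t x = 1 ∧ (k.1 + 1 = s → 0 < x) := by
  have hs : 0 < s := k.pos
  by_cases hlast : k.1 + 1 = s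
  · -- last interval: root in (0, ∞)
    have hQ0 : Q t k 0 := by
      refine ⟨by
        have : (0:ℝ) < (t k : ℝ) := by exact_mod_cast ht k
        linarith, fun i hi => absurd hi ?_⟩
      have : i.1 < s := i.2
      have : i.1 ≤ k.1 := by omega
      exact not_lt.mpr (Fin.le_def.mpr this)
    have hfr0 : (2:ℝ) ≤ fr l t 0 := by
      rw [fr_zero l t ht]
      have : ((2:ℕ):ℝ) ≤ ((∑ i, l i : ℕ) : ℝ) := by exact_mod_cast hparts
      push_cast at this
      simpa using this
    have hev : ∀ᶠ x in atTop, fr l t x < 1 ∧ 0 < x := by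
      filter_upwards [(fr_tendsto_atTop l t).eventually_lt_const (by norm_num : (0:ℝ) < 1),
        eventually_gt_atTop 0] with x h1 h2
      exact ⟨h1, h2⟩
    obtain ⟨b, hb1, hb2⟩ := hev.exists
    have hQb : Q t k b := by
      refine ⟨by linarith [hQ0.1], fun i hi => absurd hi ?_⟩
      have : i.1 < s := i.2
      have : i.1 ≤ k.1 := by omega
      exact not_lt.mpr (Fin.le_def.mpr this)
    have h0b : (0:ℝ) ≤ b := le_of_lt hb2
    have hIcc : Set.Icc (0:ℝ) b ⊆ {x | Q t k x} := by
      intro z hz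
      exact Q_ordConnected t hanti hQ0 hQb hz.1 hz.2
    have hcont : ContinuousOn (fr l t) (Set.Icc 0 b) :=
      fr_continuousOn l t hanti ht (fun x hx => hIcc hx)
    have h1mem : (1:ℝ) ∈ Set.Icc (fr l t b) (fr l t 0) := ⟨le_of_lt hb1, by linarith⟩
    obtain ⟨x, hx, hfx⟩ := intermediate_value_Icc' h0b hcont h1mem
    refine ⟨x, hIcc hx, hfx, fun _ => ?_⟩
    rcases eq_or_lt_of_le hx.1 with h | h
    · exfalso; rw [← h] at hfx; linarith
    · exact h
  · -- non-last interval: root in (-(t k), -(t (k+1)))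
    have hk1 : k.1 + 1 < s := lt_of_le_of_ne (Nat.succ_le_of_lt k.2) hlast
    set k' : Fin s := ⟨k.1 + 1, hk1⟩ with hk'def
    have hkk' : k < k' := by simp [hk'def, Fin.lt_def]
    have htkk' : -(t k : ℝ) < -(t k' : ℝ) := by
      have := hanti k k' hkk'
      have : (t k' : ℝ) < (t k : ℝ) := by exact_mod_cast this
      linarith
    -- point a with fr a > 1
    have heva : ∀ᶠ x in 𝓝[>] (-(t k : ℝ)), 1 < fr l t x ∧ Q t k x := by
      have h1 := (fr_tendsto_pole l t hanti hl ht k).eventually_gt_atTop 1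
      have h2 : ∀ᶠ x in 𝓝[>] (-(t k : ℝ)), ∀ i, k < i → x < -(t i : ℝ) := by
        refine Filter.eventually_all.2 fun i => ?_
        by_cases hi : k < i
        · have hlt : -(t k : ℝ) < -(t i : ℝ) := by
            have := hanti k i hi
            have : (t i : ℝ) < (t k : ℝ) := by exact_mod_cast this
            linarith
          filter_upwards [nhdsWithin_le_nhds (eventually_lt_nhds hlt)] with x hx
          exact fun _ => hx
        · filter_upwards [] with x
          exact fun h => absurd h hi
      filter_upwards [h1, h2, eventually_mem_nhdsWithin] with x hx1 hx2 hx3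
      exact ⟨hx1, Set.mem_Ioi.mp hx3, hx2⟩
    obtain ⟨a, ha1, ha2⟩ := heva.exists
    -- point b with fr b < 1
    have hevb : ∀ᶠ x in 𝓝[<] (-(t k' : ℝ)), fr l t x < 1 ∧ Q t k x := by
      have h1 := (fr_tendsto_pole' l t hanti hl ht k').eventually_lt_atBot 1
      filter_upwards [h1, eventually_mem_nhdsWithin,
        nhdsWithin_le_nhds (eventually_gt_nhds htkk')] with x hx1 hx2 hx3
      refine ⟨hx1, hx3, fun i hi => ?_⟩
      have hik' : k' ≤ i := by
        rw [Fin.le_def]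
        have := Fin.lt_def.mp hi
        simp only [hk'def]
        omega
      have : (t i : ℝ) ≤ (t k' : ℝ) := by
        rcases eq_or_lt_of_le hik' with h | h
        · rw [← h]
        · exact_mod_cast le_of_lt (hanti k' i h)
      have hx2' : x < -(t k' : ℝ) := Set.mem_Iio.mp hx2
      linarith
    obtain ⟨b, hb1, hb2⟩ := hevb.exists
    have hab : a ≤ b := by
      by_contra hcon
      push_neg at hcon
      have := fr_strictAntiOn l t hanti hl ht hs hb2 ha2 hcon
      linarith
    have hIcc : Set.Icc a b ⊆ {x | Q t k x} := by
      intro z hz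
      exact Q_ordConnected t hanti ha2 hb2 hz.1 hz.2
    have hcont : ContinuousOn (fr l t) (Set.Icc a b) :=
      fr_continuousOn l t hanti ht (fun x hx => hIcc hx)
    have h1mem : (1:ℝ) ∈ Set.Icc (fr l t b) (fr l t a) := ⟨le_of_lt hb1, le_of_lt ha1⟩
    obtain ⟨x, hx, hfx⟩ := intermediate_value_Icc' hab hcont h1mem
    exact ⟨x, hIcc hx, hfx, fun h => absurd h hlast⟩

include hanti hl ht in
lemma root_unique (hs : 0 < s) {k : Fin s} {x y : ℝ} (hx : Q t k x) (hy : Q t k y)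
    (hfx : fr l t x = 1) (hfy : fr l t y = 1) : x = y := by
  rcases lt_trichotomy x y with h | h | h
  · have := fr_strictAntiOn l t hanti hl ht hs hx hy h; linarith
  · exact h
  · have := fr_strictAntiOn l t hanti hl ht hs hy hx h; linarith

include hanti hl ht in
lemma mem_Q_of_root (hs : 0 < s) {x : ℝ} (hne : ∀ i, x + (t i : ℝ) ≠ 0)
    (hfx : fr l t x = 1) : ∃ k, Q t k x := by
  classical
  set z : Fin s := ⟨0, hs⟩ with hz
  have hx0 : -(t z : ℝ) < x := by
    by_contra hcon
    push_neg at hcon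
    have hlt : x < -(t z : ℝ) := lt_of_le_of_ne hcon (by
      intro h; exact hne z (by rw [h]; ring))
    have hneg : fr l t x < 0 := by
      have hterm : ∀ i : Fin s, (l i : ℝ) * (t i : ℝ) / (x + (t i : ℝ)) < 0 := by
        intro i
        have hc : (0:ℝ) < (l i : ℝ) * (t i : ℝ) := by
          have h1 : (0:ℝ) < (l i : ℝ) := by exact_mod_cast hl i
          have h2 : (0:ℝ) < (t i : ℝ) := by exact_mod_cast ht i
          positivity
        have hd : x + (t i : ℝ) < 0 := by
          have : (t i : ℝ) ≤ (t z : ℝ) := by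
            rcases eq_or_lt_of_le (show z ≤ i by rw [Fin.le_def]; exact Nat.zero_le _) with h | h
            · rw [h]
            · exact_mod_cast le_of_lt (hanti z i h)
          linarith
        exact div_neg_of_pos_of_neg hc hd
      rw [fr]
      have : ∑ i : Fin s, (l i : ℝ) * (t i : ℝ) / (x + (t i : ℝ)) <
          ∑ _i : Fin s, (0:ℝ) := by
        apply Finset.sum_lt_sum_of_nonempty (Finset.univ_nonempty_iff.mpr ⟨z⟩)
        intro i _
        exact hterm i
      simpa using this
    rw [hfx] at hneg
    norm_num at hneg
  -- take the largest k with -(t k) < x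
  set F : Finset (Fin s) := Finset.univ.filter (fun i => -(t i : ℝ) < x) with hF
  have hFne : F.Nonempty := ⟨z, by simp [hF, hx0]⟩
  set k : Fin s := F.max' hFne with hk
  have hkmem : k ∈ F := F.max'_mem hFne
  have hkx : -(t k : ℝ) < x := by
    have := Finset.mem_filter.mp hkmem
    exact this.2
  refine ⟨k, hkx, fun i hi => ?_⟩
  have hinotF : i ∉ F := by
    intro hiF
    have := F.le_max' i hiF
    rw [← hk] at this
    exact absurd hi (not_lt.mpr this)
  have : ¬ (-(t i : ℝ) < x) := by
    intro hcon
    exact hinotF (by simp [hF, hcon])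
  push_neg at this
  exact lt_of_le_of_ne this (fun h => hne i (by rw [h]; ring))

end Stmt14An

/-- The spectrum of the complete multipartite graph
`K_{l_1*t_1, …, l_s*t_s}` (with at least two parts, so that it is genuinely multipartite):
`0` has multiplicity exactly `Σ l_i (t_i - 1)`, each `-t i` has multiplicity exactly
`l i - 1`, and there are exactly `s` further eigenvalues `λ_1, …, λ_s`, each simple, none
of them in `{0, -t_1, …, -t_s}`, and exactly one of them positive. -/
theorem stmt14 {s : ℕ} (l t : Fin s → ℕ)
    (hanti : ∀ i j : Fin s, i < j → t j < t i) (hl : ∀ i, 1 ≤ l i) (ht : ∀ i, 1 ≤ t i)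
    (hparts : 2 ≤ ∑ i, l i) :
    Module.finrank ℝ
      (Module.End.eigenspace (Matrix.toLin' ((cmGraph l t).adjMatrix ℝ)) 0)
      = ∑ i, l i * (t i - 1) ∧
    (∀ i, Module.finrank ℝ
      (Module.End.eigenspace (Matrix.toLin' ((cmGraph l t).adjMatrix ℝ)) (-(t i : ℝ)))
      = l i - 1) ∧
    ∃ lam : Fin s → ℝ, Function.Injective lam ∧
      (∀ i, lam i ≠ 0) ∧ (∀ i j, lam i ≠ -(t j : ℝ)) ∧
      (∀ i, Module.finrank ℝ
        (Module.End.eigenspace (Matrix.toLin' ((cmGraph l t).adjMatrix ℝ)) (lam i)) = 1) ∧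
      (∀ μ : ℝ, Module.End.HasEigenvalue (Matrix.toLin' ((cmGraph l t).adjMatrix ℝ)) μ →
        μ = 0 ∨ (∃ i, μ = -(t i : ℝ)) ∨ ∃ i, μ = lam i) ∧
      (∃! i, 0 < lam i) := by
  classical
  have hs : 0 < s := by
    by_contra h
    push_neg at h
    interval_cases s
    simp at hparts
  -- basic cast facts
  have htpos : ∀ i : Fin s, (0:ℝ) < (t i : ℝ) := fun i => by exact_mod_cast ht i
  have htmono : ∀ i j : Fin s, i ≤ j → (t j : ℝ) ≤ (t i : ℝ) := by
    intro i j hij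
    rcases eq_or_lt_of_le hij with h | h
    · rw [h]
    · exact_mod_cast le_of_lt (hanti i j h)
  -- choose the roots
  choose lam hQ hfr hpos using fun k => Stmt14An.root_exists l t hanti hl ht hparts k
  have hfr' : ∀ k, Stmt14.fr l t (lam k) = 1 := fun k => hfr k
  have hlam_ne_negt : ∀ i j, lam i ≠ -(t j : ℝ) := by
    intro i j hcon
    rcases le_or_gt j i with h | h
    · have h1 : (t i : ℝ) ≤ (t j : ℝ) := htmono j i h
      have h2 := (hQ i).1
      rw [hcon] at h2
      linarith
    · have := (hQ i).2 j h
      rw [hcon] at this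
      exact lt_irrefl _ this
  have hlam_denom : ∀ i j, lam i + (t j : ℝ) ≠ 0 := by
    intro i j hcon
    exact hlam_ne_negt i j (by linarith)
  have hlam_ne_zero : ∀ i, lam i ≠ 0 := by
    intro i hcon
    have h1 := hfr i
    rw [hcon, Stmt14An.fr_zero l t ht] at h1
    have h2 : ((2:ℕ):ℝ) ≤ ((∑ i, l i : ℕ) : ℝ) := by exact_mod_cast hparts
    push_cast at h2
    linarith
  refine ⟨Stmt14.finrank_zero l t ht hparts, ?_, lam, ?_, hlam_ne_zero, hlam_ne_negt, ?_, ?_, ?_⟩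
  · -- eigenvalue -(t i)
    intro i
    have hne : -((t i : ℝ)) ≠ 0 := by
      have := htpos i; intro h; linarith
    rw [Stmt14.finrank_eig_eq l t ht _ hne]
    exact Stmt14.finrank_eigB_neg l t ht hanti hl i
  · -- injectivity of lam
    intro i j hij
    by_contra hne
    rcases lt_or_gt_of_ne hne with h | h
    · have h1 := (hQ i).2 j h
      have h2 := (hQ j).1
      rw [hij] at h1
      linarith
    · have h1 := (hQ j).2 i h
      have h2 := (hQ i).1
      rw [hij] at h2
      linarith
  · -- each lam i is simple
    intro i
    rw [Stmt14.finrank_eig_eq l t ht _ (hlam_ne_zero i)]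
    exact Stmt14.eigB_generic l t hparts (lam i) (hlam_denom i) (hfr' i)
  · -- completeness
    intro mu hmu
    by_cases h0 : mu = 0
    · exact Or.inl h0
    by_cases hnegt : ∃ j, mu = -(t j : ℝ)
    · exact Or.inr (Or.inl hnegt)
    refine Or.inr (Or.inr ?_)
    push_neg at hnegt
    have hmud : ∀ j, mu + (t j : ℝ) ≠ 0 := by
      intro j hcon
      exact hnegt j (by linarith)
    obtain ⟨a, ha0, ha⟩ := Stmt14.hasEig_transfer l t ht mu h0 hmu
    have hfmu : Stmt14.fr l t mu = 1 := Stmt14.eigB_complete l t mu hmud a ha0 ha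
    obtain ⟨k, hk⟩ := Stmt14An.mem_Q_of_root l t hanti hl ht hs hmud hfmu
    exact ⟨k, Stmt14An.root_unique l t hanti hl ht hs hk (hQ k) hfmu (hfr' k)⟩
  · -- exactly one positive
    have hslt : s - 1 < s := by omega
    set klast : Fin s := ⟨s - 1, hslt⟩ with hkl
    have hlastpos : 0 < lam klast := hpos klast (by simp [hkl]; omega)
    refine ⟨klast, hlastpos, ?_⟩
    intro i hi
    by_contra hne
    have hi1 : i.1 + 1 < s := by
      have := i.2
      rcases Nat.lt_or_ge (i.1 + 1) s with h | h
      · exact h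
      · exfalso; apply hne; apply Fin.ext; simp [hkl]; omega
    set i' : Fin s := ⟨i.1 + 1, hi1⟩ with hi'
    have hii' : i < i' := by simp [hi', Fin.lt_def]
    have h1 := (hQ i).2 i' hii'
    have h2 := htpos i'
    linarith
end

section
/- Let K_{l_1*t_1,...,l_s*t_s} be a complete multipartite graph with t_1 > t_2 > ... > t_s ≥ 1, and let λ be an eigenvalue of its adjacency matrix with λ ∉ {0, −t_1,...,−t_s}. Then every eigenvector z for λ is constant on each set U_i, say with common value z_i on U_i, and these values satisfy (λ + t_i) z_i = m_1 z_1 + m_2 z_2 + ... + m_s z_s for every i, where m_i = l_i t_i. Consequently, if z ≠ 0 then z_i ≠ 0 for all i, and z_i ≠ z_j whenever i ≠ j. -/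
open Matrix

/-
Writing `S = ∑ w, z w`, the eigenvalue equation at a vertex `v` reads `λ z v = S - P`, where `P`
is the sum of `z` over the part of `v`. The right side depends only on the part, so (as `λ ≠ 0`)
`z` is constant on each part, and then `P = |part| • z v` gives `(λ + |part|) z v = S`. Hence
`z_i = S / (λ + t_i)` (as `λ ≠ -t_i`), and summing recovers `S = ∑ m_j z_j`. If `z ≠ 0` then
`S ≠ 0`, so every `z_i` is nonzero, and `z_i = z_j` forces `t_i = t_j`, i.e. `i = j`.
-/

namespace SimpleGraph

variable {ι : Type*} [Fintype ι] [DecidableEq ι] {V : ι → Type*} [∀ i, Fintype (V i)]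
  [DecidableRel (completeMultipartiteGraph V).Adj]

theorem completeMultipartiteGraph_adjMatrix_mulVec_apply {R : Type*} [NonAssocRing R]
    (z : (Σ i, V i) → R) (v : Σ i, V i) :
    ((completeMultipartiteGraph V).adjMatrix R *ᵥ z) v = ∑ w, z w - ∑ k, z ⟨v.1, k⟩ := by
  have hnbr : (completeMultipartiteGraph V).neighborFinset v =
      Finset.univ.filter (fun w : Σ i, V i => w.1 ≠ v.1) := by
    ext w
    simp [ne_comm]
  rw [adjMatrix_mulVec_apply, hnbr, Finset.sum_filter, Fintype.sum_sigma, Fintype.sum_sigma,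
    Fintype.sum_eq_add_sum_compl v.1,
    Fintype.sum_eq_add_sum_compl v.1 (fun i => ∑ k, z ⟨i, k⟩)]
  simp only [ne_eq, not_true_eq_false, if_false, Finset.sum_const_zero, zero_add,
    add_sub_cancel_left]
  exact Finset.sum_congr rfl fun i hi => by simp_all

theorem completeMultipartiteGraph_add_card_mul_apply_of_eigenvector {K : Type*} [Field K]
    {lam : K} (hlam : lam ≠ 0) {z : (Σ i, V i) → K}
    (hz : (completeMultipartiteGraph V).adjMatrix K *ᵥ z = lam • z)
    (v : Σ i, V i) : (lam + Fintype.card (V v.1)) * z v = ∑ w, z w := by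
  have heq (k : V v.1) : lam * z ⟨v.1, k⟩ = ∑ w, z w - ∑ k, z ⟨v.1, k⟩ := by
    rw [← smul_eq_mul, ← Pi.smul_apply, ← hz]
    exact completeMultipartiteGraph_adjMatrix_mulVec_apply z _
  have hconst (k : V v.1) : z ⟨v.1, k⟩ = z v :=
    mul_left_cancel₀ hlam ((heq k).trans (heq v.2).symm)
  have hpart : ∑ k, z ⟨v.1, k⟩ = Fintype.card (V v.1) * z v := by
    simp [hconst]
  linear_combination heq v.2 - hpart

end SimpleGraph

theorem MV.sum_apply_fst_fst {R : Type*} [Semiring R] {s : ℕ} (l t : Fin s → ℕ)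
    (f : Fin s → R) :
    ∑ v : MV l t, f v.1.1 = ∑ i, (l i : R) * t i * f i := by
  simp [Fintype.sum_sigma, mul_assoc]

theorem stmt15_general {s : ℕ} (l t : Fin s → ℕ)
    (hanti : ∀ i j : Fin s, i < j → t j < t i)
    (lam : ℝ) (hlam0 : lam ≠ 0) (hlamt : ∀ i, lam ≠ -(t i : ℝ))
    (z : MV l t → ℝ) (hz : ((cmGraph l t).adjMatrix ℝ).mulVec z = lam • z) :
    ∃ zv : Fin s → ℝ,
      (∀ v : MV l t, z v = zv v.1.1) ∧
      (∀ i, (lam + (t i : ℝ)) * zv i = ∑ j, (l j : ℝ) * (t j : ℝ) * zv j) ∧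
      (z ≠ 0 → (∀ i, zv i ≠ 0) ∧ ∀ i j : Fin s, i ≠ j → zv i ≠ zv j) := by
  have hshift (i : Fin s) : lam + t i ≠ 0 := fun h => hlamt i (eq_neg_of_add_eq_zero_left h)
  set S := ∑ v, z v
  have hval (v : MV l t) : z v = S / (lam + t v.1.1) := by
    rw [eq_div_iff (hshift _), mul_comm]
    simpa using
      SimpleGraph.completeMultipartiteGraph_add_card_mul_apply_of_eigenvector hlam0 hz v
  have hrow (i : Fin s) : (lam + t i) * (S / (lam + t i)) = S := mul_div_cancel₀ _ (hshift i)
  refine ⟨fun i => S / (lam + t i), hval, fun i => ?_, fun hz0 => ?_⟩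
  · rw [hrow, ← MV.sum_apply_fst_fst l t (fun i => S / (lam + t i))]
    exact Finset.sum_congr rfl fun v _ => hval v
  · have hS : S ≠ 0 := fun h => hz0 (funext fun v => by simp [hval, h])
    have hzv (i : Fin s) : S / (lam + t i) ≠ 0 := div_ne_zero hS (hshift i)
    refine ⟨hzv, fun i j hij (h : S / (lam + t i) = S / (lam + t j)) => hij ?_⟩
    have hsame : (lam + t i) * (S / (lam + t j)) = (lam + t j) * (S / (lam + t j)) := by
      rw [hrow j, ← h, hrow i]
    exact StrictAnti.injective hanti
      (by exact_mod_cast add_left_cancel (mul_right_cancel₀ (hzv j) hsame))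

/-- Let `λ ∉ {0, -t_1, …, -t_s}` be an eigenvalue of the complete
multipartite graph `K_{l_1*t_1, …, l_s*t_s}`.  Then every eigenvector `z` for `λ` is
constant on each `U_i`, with common values `z_i` satisfying
`(λ + t_i) z_i = m_1 z_1 + ⋯ + m_s z_s` (`m_i = l_i t_i`) for every `i`; consequently, if
`z ≠ 0` then all `z_i` are nonzero and pairwise distinct. -/
theorem stmt15 {s : ℕ} (l t : Fin s → ℕ)
    (hanti : ∀ i j : Fin s, i < j → t j < t i) (hl : ∀ i, 1 ≤ l i) (ht : ∀ i, 1 ≤ t i)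
    (lam : ℝ) (hlam0 : lam ≠ 0) (hlamt : ∀ i, lam ≠ -(t i : ℝ))
    (z : MV l t → ℝ) (hz : ((cmGraph l t).adjMatrix ℝ).mulVec z = lam • z) :
    ∃ zv : Fin s → ℝ,
      (∀ v : MV l t, z v = zv v.1.1) ∧
      (∀ i, (lam + (t i : ℝ)) * zv i = ∑ j, (l j : ℝ) * (t j : ℝ) * zv j) ∧
      (z ≠ 0 → (∀ i, zv i ≠ 0) ∧ ∀ i j : Fin s, i ≠ j → zv i ≠ zv j) :=
  stmt15_general l t hanti lam hlam0 hlamt z hz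
end
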